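/- Let G = (V,E) be a finite simple graph with n(G) vertices and at least one edge, with covered components polynomial C(G) = C(G,x,y,z). Then the clique number ω(G), i.e., the maximum number of vertices of a complete subgraph of G, equals the maximum j ≥ 2 such that the coefficient of x^{n(G)−j+1} y^{C(j,2)} z^{1} in C(G) is positive, where C(j,2) = j(j−1)/2. -/

import Mathlib

open MvPolynomial Finset
open scoped Classical

noncomputable section

variable {V : Type}

/-- The (finite) edge set of a simple graph on a finite vertex type, as a `Finset`. -/
def edgeFinset' [Fintype V] (G : SimpleGraph V) : Finset (Sym2 V) :=
  (Set.toFinite G.edgeSet).toFinset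

/-- `k(G)`: the number of connected components of `G`. -/
def kG (G : SimpleGraph V) : ℕ := Nat.card G.ConnectedComponent

/-- `c(G)`: the number of covered components of `G`, i.e. connected components
containing at least one edge. -/
def cG (G : SimpleGraph V) : ℕ :=
  Nat.card {c : G.ConnectedComponent // ∃ v w, G.Adj v w ∧ G.connectedComponentMk v = c}

/-- The covered components polynomial
`C(G,x,y,z) = ∑_{A ⊆ E} x^{k(⟨A⟩)} y^{|A|} z^{c(⟨A⟩)}` of a finite simple graph, where
`⟨A⟩` denotes the spanning subgraph with edge set `A`, and `x = X 0`, `y = X 1`,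
`z = X 2`. -/
def ccp [Fintype V] (G : SimpleGraph V) : MvPolynomial (Fin 3) ℤ :=
  ∑ A ∈ (edgeFinset' G).powerset,
    X 0 ^ kG (SimpleGraph.fromEdgeSet (A : Set (Sym2 V))) * X 1 ^ A.card *
      X 2 ^ cG (SimpleGraph.fromEdgeSet (A : Set (Sym2 V)))

/-- `[x^i y^j z^k] P`: the coefficient of the monomial `x^i y^j z^k`. -/
def coeff3 (P : MvPolynomial (Fin 3) ℤ) (i j k : ℕ) : ℤ :=
  MvPolynomial.coeff (Finsupp.single 0 i + Finsupp.single 1 j + Finsupp.single 2 k) P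

/-- `ω(G)`: the clique number, the maximum number of vertices of a complete subgraph. -/
def cliqueNum' (G : SimpleGraph V) : ℕ :=
  sSup {j | ∃ s : Finset V, G.IsNClique j s}

/-! A set `A` of edges contributes to the coefficient of `x^{n-j+1} y^{C(j,2)} z` exactly when
`⟨A⟩` has one covered component and `n - j` isolated vertices, i.e. its `C(j,2)` edges are spread
over exactly `j` vertices. As `j` vertices carry at most `C(j,2)` edges, `A` is then the edge set of
a `j`-clique of `G`; conversely the edges of a `j`-clique with `j ≥ 2` form such an `A`. Since `G`
has an edge, `2` is a clique size, so the maximum over `j ≥ 2` is the clique number. -/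

lemma csSup_setOf_le_and_mem {α : Type*} [ConditionallyCompleteLinearOrder α] {S : Set α} {k : α}
    (hk : k ∈ S) : sSup {j | k ≤ j ∧ j ∈ S} = sSup S :=
  csSup_eq_csSup_of_forall_exists_le (fun j hj => ⟨j, hj.2, le_rfl⟩) fun j hj =>
    ⟨max j k, ⟨le_max_right j k, by rcases max_choice j k with h | h <;> rwa [h]⟩,
      le_max_left j k⟩

lemma X_pow_mul_X_pow_mul_X_pow {R : Type*} [CommSemiring R] (a b c : ℕ) :
    (X 0 ^ a * X 1 ^ b * X 2 ^ c : MvPolynomial (Fin 3) R) =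
      monomial (Finsupp.single 0 a + Finsupp.single 1 b + Finsupp.single 2 c) 1 := by
  simp only [X_pow_eq_monomial, monomial_mul, mul_one]

lemma single_add_single_add_single_inj {a b c a' b' c' : ℕ} :
    (Finsupp.single 0 a + Finsupp.single 1 b + Finsupp.single 2 c : Fin 3 →₀ ℕ) =
        Finsupp.single 0 a' + Finsupp.single 1 b' + Finsupp.single 2 c' ↔
      a = a' ∧ b = b' ∧ c = c' := by
  refine ⟨fun h => ⟨?_, ?_, ?_⟩, by rintro ⟨rfl, rfl, rfl⟩; rfl⟩
  · simpa using DFunLike.congr_fun h 0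
  · simpa using DFunLike.congr_fun h 1
  · simpa using DFunLike.congr_fun h 2

lemma coeff3_ccp [Fintype V] (G : SimpleGraph V) (i m c : ℕ) :
    coeff3 (ccp G) i m c = #((edgeFinset' G).powerset.filter fun A : Finset (Sym2 V) =>
      kG (SimpleGraph.fromEdgeSet (A : Set (Sym2 V))) = i ∧ #A = m ∧
        cG (SimpleGraph.fromEdgeSet (A : Set (Sym2 V))) = c) := by
  rw [coeff3, ccp, coeff_sum, card_filter, Nat.cast_sum]
  refine sum_congr rfl fun A _ => ?_
  simp only [X_pow_mul_X_pow_mul_X_pow, coeff_monomial, single_add_single_add_single_inj]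
  push_cast
  rfl

def completeEdgesOn (s : Finset V) : Finset (Sym2 V) := s.offDiag.image Sym2.mk.uncurry

lemma mk_mem_completeEdgesOn {s : Finset V} {u v : V} :
    s(u, v) ∈ completeEdgesOn s ↔ u ∈ s ∧ v ∈ s ∧ u ≠ v := by
  simp only [completeEdgesOn, mem_image, mem_offDiag, Prod.exists, Function.uncurry_apply_pair,
    Sym2.eq_iff]
  aesop

lemma card_completeEdgesOn (s : Finset V) : #(completeEdgesOn s) = (#s).choose 2 :=
  Sym2.card_image_offDiag s

namespace SimpleGraph

variable {H : SimpleGraph V}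

lemma mem_support_of_connectedComponentMk_eq {v w : V} (hw : w ∈ H.support)
    (h : H.connectedComponentMk v = H.connectedComponentMk w) : v ∈ H.support := by
  by_cases hvw : v = w
  · exact hvw ▸ hw
  · exact mem_support_of_reachable hvw (ConnectedComponent.exact h)

lemma image_connectedComponentMk_compl_support :
    H.connectedComponentMk '' H.supportᶜ =
      {c | ¬ ∃ v w, H.Adj v w ∧ H.connectedComponentMk v = c} := by
  ext c
  constructor
  · rintro ⟨v, hv, rfl⟩ ⟨w, u, hwu, hc⟩
    exact hv (mem_support_of_connectedComponentMk_eq ⟨u, hwu⟩ hc.symm)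
  · intro hc
    obtain ⟨v, rfl⟩ := c.exists_rep
    exact ⟨v, fun ⟨w, hvw⟩ => hc ⟨v, w, hvw, rfl⟩, rfl⟩

lemma injOn_connectedComponentMk_compl_support :
    Set.InjOn H.connectedComponentMk H.supportᶜ := fun _ hv _ _ h =>
  by_contra fun hvw => hv (mem_support_of_reachable hvw (ConnectedComponent.exact h))

lemma kG_eq_cG_add_ncard_compl_support [Finite V] (H : SimpleGraph V) :
    kG H = cG H + H.supportᶜ.ncard := by
  rw [kG, cG, ← injOn_connectedComponentMk_compl_support.ncard_image,
    image_connectedComponentMk_compl_support, ← Nat.card_coe_set_eq, ← Nat.card_sum]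
  exact (Nat.card_congr (Equiv.sumCompl _)).symm

variable {G : SimpleGraph V} {s : Finset V}

lemma isClique_iff_completeEdgesOn_subset :
    G.IsClique (s : Set V) ↔ (completeEdgesOn s : Set (Sym2 V)) ⊆ G.edgeSet := by
  refine ⟨fun h e he => ?_, fun h u hu v hv huv => h (mk_mem_completeEdgesOn.2 ⟨hu, hv, huv⟩)⟩
  induction e using Sym2.ind with
  | h u v =>
    obtain ⟨hu, hv, huv⟩ := mk_mem_completeEdgesOn.1 he
    exact h hu hv huv

lemma fromEdgeSet_completeEdgesOn_adj {u v : V} :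
    (fromEdgeSet (completeEdgesOn s : Set (Sym2 V))).Adj u v ↔ u ∈ s ∧ v ∈ s ∧ u ≠ v := by
  rw [fromEdgeSet_adj, mem_coe, mk_mem_completeEdgesOn]
  tauto

lemma support_fromEdgeSet_completeEdgesOn (hs : 1 < #s) :
    (fromEdgeSet (completeEdgesOn s : Set (Sym2 V))).support = s := by
  ext u
  simp only [mem_support, fromEdgeSet_completeEdgesOn_adj, mem_coe]
  refine ⟨fun ⟨_, hu, _⟩ => hu, fun hu => ?_⟩
  obtain ⟨v, hv, hvu⟩ := exists_mem_ne hs u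
  exact ⟨v, hu, hv, hvu.symm⟩

lemma cG_fromEdgeSet_completeEdgesOn (hs : 1 < #s) :
    cG (fromEdgeSet (completeEdgesOn s : Set (Sym2 V))) = 1 := by
  set H := fromEdgeSet (completeEdgesOn s : Set (Sym2 V))
  obtain ⟨u, hu, v, hv, huv⟩ := one_lt_card.1 hs
  have h_mk_eq : ∀ a b, H.Adj a b → H.connectedComponentMk a = H.connectedComponentMk u := by
    intro a b hab
    by_cases hau : a = u
    · rw [hau]
    · have ha : a ∈ s := (fromEdgeSet_completeEdgesOn_adj.1 hab).1
      exact ConnectedComponent.sound (fromEdgeSet_completeEdgesOn_adj.2 ⟨ha, hu, hau⟩).reachable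
  rw [cG, Nat.card_eq_one_iff_unique]
  refine ⟨⟨fun ⟨_, a, b, hab, hc⟩ ⟨_, a', b', hab', hc'⟩ => Subtype.ext ?_⟩,
    ⟨⟨_, u, v, fromEdgeSet_completeEdgesOn_adj.2 ⟨hu, hv, huv⟩, rfl⟩⟩⟩
  exact hc.symm.trans ((h_mk_eq a b hab).trans ((h_mk_eq a' b' hab').symm.trans hc'))

lemma kG_fromEdgeSet_completeEdgesOn [Fintype V] (hs : 1 < #s) :
    kG (fromEdgeSet (completeEdgesOn s : Set (Sym2 V))) = 1 + (Fintype.card V - #s) := by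
  rw [kG_eq_cG_add_ncard_compl_support, cG_fromEdgeSet_completeEdgesOn hs,
    support_fromEdgeSet_completeEdgesOn hs, Set.ncard_compl, Set.ncard_coe_finset,
    Nat.card_eq_fintype_card]

lemma subset_completeEdgesOn_support [Fintype V] {A : Finset (Sym2 V)}
    (hA : ∀ e ∈ A, ¬ e.IsDiag) :
    A ⊆ completeEdgesOn (fromEdgeSet (A : Set (Sym2 V))).support.toFinset := by
  intro e he
  induction e using Sym2.ind with
  | h u v =>
    have huv : u ≠ v := by simpa using hA _ he
    have hadj : (fromEdgeSet (A : Set (Sym2 V))).Adj u v := (fromEdgeSet_adj _).2 ⟨he, huv⟩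
    exact mk_mem_completeEdgesOn.2 ⟨by simpa using ⟨v, hadj⟩, by simpa using ⟨u, hadj.symm⟩, huv⟩

lemma coe_edgeFinset' [Fintype V] (G : SimpleGraph V) :
    (edgeFinset' G : Set (Sym2 V)) = G.edgeSet :=
  Set.Finite.coe_toFinset _

lemma exists_isNClique_two_of_card_edgeFinset'_pos [Fintype V] (h : 0 < #(edgeFinset' G)) :
    ∃ s : Finset V, G.IsNClique 2 s := by
  obtain ⟨e, he⟩ := card_pos.1 h
  rw [← mem_coe, coe_edgeFinset'] at he
  induction e using Sym2.ind with
  | h u v => exact ⟨{u, v}, by simpa [G.ne_of_adj he], card_pair (G.ne_of_adj he)⟩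

lemma isNClique_support_fromEdgeSet [Fintype V] {A : Finset (Sym2 V)} {j : ℕ}
    (hA : (A : Set (Sym2 V)) ⊆ G.edgeSet) (hc : cG (fromEdgeSet (A : Set (Sym2 V))) = 1)
    (hk : kG (fromEdgeSet (A : Set (Sym2 V))) + j = Fintype.card V + 1)
    (hcard : #A = j.choose 2) :
    G.IsNClique j (fromEdgeSet (A : Set (Sym2 V))).support.toFinset := by
  set S := (fromEdgeSet (A : Set (Sym2 V))).support.toFinset
  have hS : #S = j := by
    have h := kG_eq_cG_add_ncard_compl_support (fromEdgeSet (A : Set (Sym2 V)))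
    have hsupp : (fromEdgeSet (A : Set (Sym2 V))).support.ncard = #S := by
      convert Set.ncard_eq_toFinset_card' _
    rw [hc, Set.ncard_compl, Nat.card_eq_fintype_card, hsupp] at h
    have : #S ≤ Fintype.card V := card_le_univ S
    omega
  have hAS : A = completeEdgesOn S :=
    eq_of_subset_of_card_le
      (subset_completeEdgesOn_support fun e he => G.not_isDiag_of_mem_edgeSet (hA he))
      (by rw [card_completeEdgesOn, hS, hcard])
  exact ⟨isClique_iff_completeEdgesOn_subset.2 (hAS ▸ hA), hS⟩

lemma exists_coeff3_ccp_pos_iff [Fintype V] (G : SimpleGraph V) {j : ℕ} (hj : 2 ≤ j) :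
    (∃ i, i + j = Fintype.card V + 1 ∧ 0 < coeff3 (ccp G) i (j.choose 2) 1) ↔
      ∃ s : Finset V, G.IsNClique j s := by
  simp only [coeff3_ccp, Nat.cast_pos, card_pos, filter_nonempty_iff, mem_powerset,
    ← coe_subset, coe_edgeFinset']
  constructor
  · rintro ⟨i, hij, A, hAG, hk, hcard, hc⟩
    exact ⟨_, isNClique_support_fromEdgeSet hAG hc (hk ▸ hij) hcard⟩
  · rintro ⟨s, hs⟩
    have hs1 : 1 < #s := hs.card_eq ▸ hj
    have hsV : j ≤ Fintype.card V := hs.card_eq ▸ card_le_univ s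
    refine ⟨1 + (Fintype.card V - j), by omega, completeEdgesOn s,
      isClique_iff_completeEdgesOn_subset.1 hs.isClique, ?_, ?_, cG_fromEdgeSet_completeEdgesOn hs1⟩
    · rw [kG_fromEdgeSet_completeEdgesOn hs1, hs.card_eq]
    · rw [card_completeEdgesOn, hs.card_eq]

end SimpleGraph

/-- Let `G` be a finite simple graph on `n(G)` vertices with at least
one edge.  Then the clique number `ω(G)` equals the maximum `j ≥ 2` such that the
coefficient of `x^{n(G)−j+1} y^{C(j,2)} z^1` in `C(G)` is positive (the exponent of `x`
being the natural number `i` with `i + j = n(G) + 1`). -/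
theorem ccp_clique_number {V : Type} [Fintype V] (G : SimpleGraph V)
    (h : 0 < (edgeFinset' G).card) :
    cliqueNum' G =
      sSup {j | 2 ≤ j ∧ ∃ i, i + j = Fintype.card V + 1 ∧
        0 < coeff3 (ccp G) i (j.choose 2) 1} := by
  have h2 : 2 ∈ {j | ∃ s : Finset V, G.IsNClique j s} :=
    SimpleGraph.exists_isNClique_two_of_card_edgeFinset'_pos h
  have hsets : {j | 2 ≤ j ∧ ∃ i, i + j = Fintype.card V + 1 ∧
      0 < coeff3 (ccp G) i (j.choose 2) 1} =
        {j | 2 ≤ j ∧ j ∈ {j | ∃ s : Finset V, G.IsNClique j s}} :=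
    Set.ext fun _ => and_congr_right G.exists_coeff3_ccp_pos_iff
  rw [hsets, csSup_setOf_le_and_mem h2, cliqueNum']

end
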